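/- arXiv:2411.13141 — 4 statements merged into one kernel-verified Lean document; each statement's English description precedes it below -/
import Mathlib

section
/- Let G be a finite simple graph, S a set of vertices of G, and C the vertex set of a connected component of G − S such that C is a clique in G. Let f be a Roman dominating function on G, and suppose there exist two distinct vertices v1, v2 ∈ C such that neither v1 nor v2 has a neighbor u ∈ S with f(u) = 2. Then either some vertex of C satisfies f(w) = 2, or there exists a Roman dominating function f' on G with w(f') ≤ w(f), f'(x) = f(x) for every vertex x ∉ {v1, v2}, and some vertex w ∈ C with f'(w) = 2. -/
/-- Let `C` be the vertex set of a connected component of `G − S` that is a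
clique in `G`, `f` a Roman dominating function on `G`, and `v1 ≠ v2` vertices of `C`
neither of which has a neighbor in `S` with label `2`.  Then either some vertex of `C`
has label `2`, or there is a Roman dominating function `f'` of weight at most that of `f`
agreeing with `f` outside `{v1, v2}` and assigning `2` to some vertex of `C`. -/
theorem rdf_t2_clique_component
    {V : Type*} [Fintype V] (G : SimpleGraph V) (S : Set V) (C : Set V)
    (hC : ∃ c : (SimpleGraph.induce (Sᶜ : Set V) G).ConnectedComponent,
      C = Subtype.val '' c.supp)
    (hclique : G.IsClique C)
    (f : V → ℕ) (hrange : ∀ x, f x ≤ 2)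
    (hRDF : ∀ x, f x = 0 → ∃ y, G.Adj x y ∧ f y = 2)
    (v1 v2 : V) (hv1 : v1 ∈ C) (hv2 : v2 ∈ C) (hne : v1 ≠ v2)
    (h1 : ∀ u ∈ S, G.Adj v1 u → f u ≠ 2)
    (h2 : ∀ u ∈ S, G.Adj v2 u → f u ≠ 2) :
    (∃ w ∈ C, f w = 2) ∨
    (∃ f' : V → ℕ, (∀ x, f' x ≤ 2) ∧
      (∀ x, f' x = 0 → ∃ y, G.Adj x y ∧ f' y = 2) ∧
      (∑ x, f' x) ≤ (∑ x, f x) ∧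
      (∀ x, x ≠ v1 → x ≠ v2 → f' x = f x) ∧
      (∃ w ∈ C, f' w = 2)) := by
  classical
  by_cases hex : ∃ w ∈ C, f w = 2
  · exact Or.inl hex
  push_neg at hex
  right
  obtain ⟨c, hCc⟩ := hC
  -- neighbors of a vertex of C outside S are in C
  have hnbr : ∀ v ∈ C, ∀ y, G.Adj v y → y ∉ S → y ∈ C := by
    intro v hv y hadj hyS
    subst hCc
    obtain ⟨v', hv', hvv⟩ := hv
    refine ⟨⟨y, hyS⟩, ?_, rfl⟩
    have hadj' : (SimpleGraph.induce (Sᶜ : Set V) G).Adj v' ⟨y, hyS⟩ := by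
      simpa [SimpleGraph.comap, hvv] using hadj
    have hv'' : (SimpleGraph.induce (Sᶜ : Set V) G).connectedComponentMk v' = c := hv'
    simp only [SimpleGraph.ConnectedComponent.mem_supp_iff] at *
    rw [← hv'']
    exact SimpleGraph.ConnectedComponent.sound hadj'.symm.reachable
  have key : ∀ v ∈ C, (∀ u ∈ S, G.Adj v u → f u ≠ 2) → f v ≠ 0 := by
    intro v hv hno hv0
    obtain ⟨y, hadj, hy2⟩ := hRDF v hv0
    by_cases hyS : y ∈ S
    · exact hno y hyS hadj hy2
    · exact hex y (hnbr v hv y hadj hyS) hy2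
  have hf1 : f v1 = 1 := by
    have := hrange v1; have := hex v1 hv1; have := key v1 hv1 h1; omega
  have hf2 : f v2 = 1 := by
    have := hrange v2; have := hex v2 hv2; have := key v2 hv2 h2; omega
  refine ⟨fun x => if x = v1 then 2 else if x = v2 then 0 else f x, ?_, ?_, ?_, ?_, ?_⟩
  · intro x
    dsimp only
    split_ifs with h h'
    · omega
    · omega
    · exact hrange x
  · intro x hx0
    by_cases hxv1 : x = v1
    · simp [hxv1] at hx0
    by_cases hxv2 : x = v2
    · subst hxv2
      exact ⟨v1, (hclique hv1 hv2 hne).symm, by simp⟩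
    · simp only [if_neg hxv1, if_neg hxv2] at hx0
      obtain ⟨y, hadj, hy2⟩ := hRDF x hx0
      have hy1 : y ≠ v1 := by rintro rfl; omega
      have hy2' : y ≠ v2 := by rintro rfl; omega
      exact ⟨y, hadj, by simp [hy1, hy2', hy2]⟩
  · have hsum : ∀ g : V → ℕ,
        ∑ x, g x = g v1 + (g v2 + ∑ x ∈ (Finset.univ.erase v1).erase v2, g x) := by
      intro g
      rw [← Finset.add_sum_erase _ g (Finset.mem_univ v1),
        ← Finset.add_sum_erase _ g (Finset.mem_erase.2 ⟨hne.symm, Finset.mem_univ v2⟩)]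
    rw [hsum, hsum f]
    have : ∑ x ∈ (Finset.univ.erase v1).erase v2,
        (if x = v1 then 2 else if x = v2 then 0 else f x) =
        ∑ x ∈ (Finset.univ.erase v1).erase v2, f x := by
      apply Finset.sum_congr rfl
      intro x hx
      simp only [Finset.mem_erase] at hx
      simp [hx.1, hx.2.1]
    rw [this]
    simp [Ne.symm hne, hf1, hf2]
    omega
  · intro x hx1 hx2; simp [hx1, hx2]
  · exact ⟨v1, hv1, by simp⟩
end

section
/- Let U be a finite set and F = (S_1, …, S_m) a family of nonempty subsets of U, and let G(U,F) be the associated split graph. For every Roman dominating function f on G(U,F) there exists a Roman dominating function g on G(U,F) with w(g) ≤ w(f) and g(v) = 0 for every set-vertex v ∈ {s_j^i : j ∈ [m], i ∈ {1,2}}. -/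
/-- Adjacency of the split graph `G(U,F)`: the universe `α` forms a clique, each set
`S_j` has two corresponding set-vertices `s_j^1, s_j^2` (encoded as `(j, i) : Fin m × Fin 2`),
and `u ∈ α` is adjacent to `s_j^i` iff `u ∈ S_j`; the set-vertices are pairwise non-adjacent. -/
def splitAdj {α : Type*} {m : ℕ} (F : Fin m → Finset α) :
    (α ⊕ Fin m × Fin 2) → (α ⊕ Fin m × Fin 2) → Prop
  | .inl u, .inl v => u ≠ v
  | .inl u, .inr p => u ∈ F p.1
  | .inr p, .inl u => u ∈ F p.1
  | .inr _, .inr _ => False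

/-- The split graph `G(U,F)`. -/
def splitGraph {α : Type*} {m : ℕ} (F : Fin m → Finset α) :
    SimpleGraph (α ⊕ Fin m × Fin 2) where
  Adj := splitAdj F
  symm := ⟨by rintro (u|p) (v|q) h <;> simp_all [splitAdj]; exact Ne.symm h⟩
  loopless := ⟨by rintro (u|p) h <;> simp_all [splitAdj]⟩

/-!
If some set `S_j` contains no vertex of value `2`, both copies `s_j^1, s_j^2` have nonzero value,
since their only neighbours lie in `S_j`; so they carry weight at least `2`. Put every set-vertex
to `0` and, for each such `S_j`, raise one chosen vertex of `S_j` to `2`: the weight does not grow,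
every `S_j` now contains a vertex of value `2`, and this dominates all set-vertices as well as
every universe vertex that used to rely on a set-vertex.
-/

open Finset

def IsRomanDominating {V : Type*} (G : SimpleGraph V) (f : V → ℕ) : Prop :=
  (∀ x, f x ≤ 2) ∧ ∀ x, f x = 0 → ∃ y, G.Adj x y ∧ f y = 2

theorem Finset.exists_card_le_forall_exists_mem {ι α : Type*} (s : Finset ι) (F : ι → Finset α)
    (hF : ∀ i ∈ s, (F i).Nonempty) : ∃ R : Finset α, #R ≤ #s ∧ ∀ i ∈ s, ∃ u ∈ F i, u ∈ R := by
  classical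
  choose pick hpick using hF
  refine ⟨s.attach.image fun i : s => pick i i.2, card_image_le.trans_eq s.card_attach, fun i hi => ?_⟩
  exact ⟨pick i hi, hpick i hi, mem_image_of_mem _ (mem_attach s ⟨i, hi⟩)⟩

def shiftToUniverse {α β : Type*} [DecidableEq α] (f : α ⊕ β → ℕ) (R : Finset α) : α ⊕ β → ℕ :=
  Sum.elim (fun u => if u ∈ R then 2 else f (.inl u)) 0

section shiftToUniverse

variable {α β : Type*} [DecidableEq α] {f : α ⊕ β → ℕ} {R : Finset α}

theorem shiftToUniverse_inl_eq_two {u : α} (h : u ∈ R ∨ f (.inl u) = 2) :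
    shiftToUniverse f R (.inl u) = 2 := by
  simp only [shiftToUniverse, Sum.elim_inl]
  split_ifs with hu
  · rfl
  · exact h.resolve_left hu

theorem sum_shiftToUniverse_le [Fintype α] [Fintype β] :
    ∑ x, shiftToUniverse f R x ≤ ∑ u, f (.inl u) + 2 * #R := calc
  ∑ x, shiftToUniverse f R x = ∑ u, if u ∈ R then 2 else f (.inl u) := by
    simp [shiftToUniverse, Fintype.sum_sum_type]
  _ ≤ ∑ u, (f (.inl u) + if u ∈ R then 2 else 0) :=
    sum_le_sum fun u _ => by split_ifs <;> omega
  _ = ∑ u, f (.inl u) + 2 * #R := by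
    rw [sum_add_distrib, sum_ite_mem, univ_inter, sum_const, smul_eq_mul, mul_comm]

end shiftToUniverse

section splitGraph

variable {α : Type*} {m : ℕ} {F : Fin m → Finset α} {f : α ⊕ Fin m × Fin 2 → ℕ}

theorem splitGraph_adj_inr_iff {p : Fin m × Fin 2} {y : α ⊕ Fin m × Fin 2} :
    (splitGraph F).Adj (.inr p) y ↔ ∃ u ∈ F p.1, y = .inl u := by
  cases y with
  | inl v => exact ⟨fun h => ⟨v, h, rfl⟩, fun ⟨u, hu, he⟩ => Sum.inl_injective he ▸ hu⟩
  | inr q => exact ⟨False.elim, fun ⟨_, _, he⟩ => Sum.inr_ne_inl he⟩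

theorem IsRomanDominating.splitGraph_inr_ne_zero (hf : IsRomanDominating (splitGraph F) f)
    {p : Fin m × Fin 2} (hp : ∀ u ∈ F p.1, f (.inl u) ≠ 2) : f (.inr p) ≠ 0 := fun h0 => by
  obtain ⟨y, hadj, hy⟩ := hf.2 _ h0
  obtain ⟨u, hu, rfl⟩ := splitGraph_adj_inr_iff.mp hadj
  exact hp u hu hy

theorem IsRomanDominating.two_mul_card_le_sum_inr [Fintype α]
    (hf : IsRomanDominating (splitGraph F) f) {s : Finset (Fin m)}
    (hs : ∀ j ∈ s, ∀ u ∈ F j, f (.inl u) ≠ 2) : 2 * #s ≤ ∑ p, f (.inr p) := calc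
  2 * #s = #(s ×ˢ (univ : Finset (Fin 2))) • 1 := by simp [mul_comm]
  _ ≤ ∑ p ∈ s ×ˢ univ, f (.inr p) := card_nsmul_le_sum _ _ 1 fun p hp =>
    Nat.one_le_iff_ne_zero.mpr (hf.splitGraph_inr_ne_zero (hs p.1 (mem_product.mp hp).1))
  _ ≤ ∑ p, f (.inr p) := sum_le_sum_of_subset (subset_univ _)

theorem isRomanDominating_shiftToUniverse [DecidableEq α]
    (hf : IsRomanDominating (splitGraph F) f) {R : Finset α}
    (hR : ∀ j, (∀ u ∈ F j, f (.inl u) ≠ 2) → ∃ u ∈ F j, u ∈ R) :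
    IsRomanDominating (splitGraph F) (shiftToUniverse f R) := by
  have hcov : ∀ j, ∃ u ∈ F j, shiftToUniverse f R (.inl u) = 2 := fun j => by
    by_cases hj : ∀ u ∈ F j, f (.inl u) ≠ 2
    · obtain ⟨u, hu, huR⟩ := hR j hj
      exact ⟨u, hu, shiftToUniverse_inl_eq_two (.inl huR)⟩
    · push Not at hj
      obtain ⟨u, hu, hfu⟩ := hj
      exact ⟨u, hu, shiftToUniverse_inl_eq_two (.inr hfu)⟩
  refine ⟨fun x => ?_, fun x hx => ?_⟩
  · rcases x with u | p
    · simp only [shiftToUniverse, Sum.elim_inl]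
      split_ifs
      exacts [le_rfl, hf.1 _]
    · exact Nat.zero_le _
  rcases x with u | p
  · have hfu : f (.inl u) = 0 := by
      simp only [shiftToUniverse, Sum.elim_inl] at hx
      split_ifs at hx
      exact hx
    obtain ⟨y, hadj, hy⟩ := hf.2 _ hfu
    rcases y with v | p
    · exact ⟨.inl v, hadj, shiftToUniverse_inl_eq_two (.inr hy)⟩
    · obtain ⟨w, hw, hw2⟩ := hcov p.1
      have hwu : u ≠ w := by rintro rfl; omega
      exact ⟨.inl w, hwu, hw2⟩
  · obtain ⟨u, hu, hu2⟩ := hcov p.1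
    exact ⟨.inl u, hu, hu2⟩

end splitGraph

/-- For every Roman dominating function `f` on the split graph `G(U,F)`
(with all sets `S_j` nonempty) there is a Roman dominating function `g` with
`w(g) ≤ w(f)` and `g v = 0` for every set-vertex `v`. -/
theorem splitGraph_rdf_zero_on_set_vertices
    {α : Type*} [Fintype α] {m : ℕ} (F : Fin m → Finset α)
    (hne : ∀ j, (F j).Nonempty)
    (f : (α ⊕ Fin m × Fin 2) → ℕ) (hrange : ∀ x, f x ≤ 2)
    (hRDF : ∀ x, f x = 0 → ∃ y, (splitGraph F).Adj x y ∧ f y = 2) :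
    ∃ g : (α ⊕ Fin m × Fin 2) → ℕ, (∀ x, g x ≤ 2) ∧
      (∀ x, g x = 0 → ∃ y, (splitGraph F).Adj x y ∧ g y = 2) ∧
      (∑ x, g x) ≤ (∑ x, f x) ∧
      (∀ p : Fin m × Fin 2, g (Sum.inr p) = 0) := by
  classical
  have hf : IsRomanDominating (splitGraph F) f := ⟨hrange, hRDF⟩
  set s := univ.filter fun j => ∀ u ∈ F j, f (.inl u) ≠ 2
  obtain ⟨R, hRs, hR⟩ := s.exists_card_le_forall_exists_mem F fun j _ => hne j
  obtain ⟨hg_range, hg_dom⟩ :=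
    isRomanDominating_shiftToUniverse hf fun j hj => hR j (mem_filter.mpr ⟨mem_univ j, hj⟩)
  refine ⟨shiftToUniverse f R, hg_range, hg_dom, ?_, fun _ => rfl⟩
  calc ∑ x, shiftToUniverse f R x ≤ ∑ u, f (.inl u) + 2 * #R := sum_shiftToUniverse_le
    _ ≤ ∑ u, f (.inl u) + 2 * #s := by gcongr
    _ ≤ ∑ u, f (.inl u) + ∑ p, f (.inr p) := by
      gcongr
      exact hf.two_mul_card_le_sum_inr fun j hj => (mem_filter.mp hj).2
    _ = ∑ x, f x := (Fintype.sum_sum_type f).symm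
end

section
/- Let U be a nonempty finite set, F = (S_1, …, S_m) a family of nonempty subsets of U, G(U,F) the associated split graph, and t ≥ 1 an integer. Then (U,F) has a hitting set of size at most t if and only if G(U,F) admits a Roman dominating function of weight at most 2t. -/
/-!
A hitting set `H` gives the Roman dominating function that is `2` on `H` and `0` elsewhere:
`U` is a clique and every set-vertex `s_j^i` sees the element of `H` hitting `S_j`.
Conversely, let `f` be a Roman dominating function. The universe vertices carrying `2` hit every
set `S_j` except those whose two vertices `s_j^1, s_j^2` have no neighbour of value `2`; both of
these then carry a positive value, so replacing them by one element of `S_j` costs no weight.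
-/

open Finset

namespace SplitGraph

variable {α : Type*} {m : ℕ} (F : Fin m → Finset α)

def IsHittingSet (H : Finset α) : Prop :=
  ∀ j, ∃ u ∈ H, u ∈ F j

def RomanDominates {V : Type*} (G : SimpleGraph V) (f : V → ℕ) : Prop :=
  ∀ x, f x = 0 → ∃ y, G.Adj x y ∧ f y = 2

@[simp] lemma adj_inl_inl {u v : α} : (splitGraph F).Adj (.inl u) (.inl v) ↔ u ≠ v := Iff.rfl

@[simp] lemma adj_inr_inl {p : Fin m × Fin 2} {u : α} :
    (splitGraph F).Adj (.inr p) (.inl u) ↔ u ∈ F p.1 := Iff.rfl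

@[simp] lemma not_adj_inr_inr {p q : Fin m × Fin 2} : ¬ (splitGraph F).Adj (.inr p) (.inr q) :=
  id

lemma exists_nonempty_isHittingSet [Nonempty α] {H : Finset α} (hH : IsHittingSet F H) :
    ∃ H' : Finset α, H'.Nonempty ∧ IsHittingSet F H' ∧ H'.card ≤ max H.card 1 := by
  rcases H.eq_empty_or_nonempty with rfl | hH_ne
  · obtain ⟨a⟩ := ‹Nonempty α›
    exact ⟨{a}, singleton_nonempty a, fun j => by simpa using hH j, by simp⟩
  · exact ⟨H, hH_ne, hH, le_max_left _ _⟩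

section Forward

variable {β : Type*}

def romanOfSet [DecidableEq α] (H : Finset α) : α ⊕ β → ℕ :=
  Sum.elim (fun u => if u ∈ H then 2 else 0) 0

variable {F}

lemma romanOfSet_le_two [DecidableEq α] (H : Finset α) (x : α ⊕ β) : romanOfSet H x ≤ 2 := by
  rcases x with u | _
  · simp only [romanOfSet, Sum.elim_inl]
    split_ifs <;> omega
  · exact Nat.zero_le 2

lemma sum_romanOfSet [Fintype α] [DecidableEq α] [Fintype β] (H : Finset α) :
    ∑ x : α ⊕ β, romanOfSet H x = 2 * H.card := by
  simp [romanOfSet, Fintype.sum_sum_type, sum_ite_mem, mul_comm]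

lemma romanDominates_romanOfSet [DecidableEq α] {H : Finset α} (hH : IsHittingSet F H)
    (hH_ne : H.Nonempty) :
    RomanDominates (splitGraph F) (romanOfSet H) := by
  rintro (v | p) hv
  · obtain ⟨u, hu⟩ := hH_ne
    have hvH : v ∉ H := by simpa [romanOfSet] using hv
    exact ⟨.inl u, (adj_inl_inl F).mpr (by rintro rfl; exact hvH hu), by simp [romanOfSet, hu]⟩
  · obtain ⟨u, huH, huF⟩ := hH p.1
    exact ⟨.inl u, by simpa using huF, by simp [romanOfSet, huH]⟩

end Forward

section Backward

variable {F} (f : α ⊕ Fin m × Fin 2 → ℕ)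

def twos [Fintype α] : Finset α :=
  univ.filter fun u => f (.inl u) = 2

variable (F) in
def unhit : Finset (Fin m) :=
  univ.filter fun j => ∀ u ∈ F j, f (.inl u) ≠ 2

noncomputable def hittingSetOf [Fintype α] [DecidableEq α] (hne : ∀ j, (F j).Nonempty) :
    Finset α :=
  twos f ∪ (unhit F f).image fun j => (hne j).choose

variable {f}

lemma one_le_of_mem_unhit (hf : RomanDominates (splitGraph F) f) {j : Fin m}
    (hj : j ∈ unhit F f) (i : Fin 2) : 1 ≤ f (.inr (j, i)) := by
  by_contra! h
  obtain ⟨y, hadj, hy⟩ := hf _ (Nat.lt_one_iff.mp h)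
  rcases y with u | q
  · exact (mem_filter.mp hj).2 u ((adj_inr_inl F).mp hadj) hy
  · exact not_adj_inr_inr F hadj

lemma two_mul_card_twos_add_card_unhit_le [Fintype α] (hf : RomanDominates (splitGraph F) f) :
    2 * ((twos f).card + (unhit F f).card) ≤ ∑ x, f x := by
  have h_twos : (twos f).card • 2 ≤ ∑ u, f (.inl u) :=
    calc (twos f).card • 2 ≤ ∑ u ∈ twos f, f (.inl u) :=
          card_nsmul_le_sum _ _ _ fun u hu => (mem_filter.mp hu).2.ge
      _ ≤ ∑ u, f (.inl u) := sum_le_sum_of_subset (subset_univ _)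
  have h_unhit : ((unhit F f) ×ˢ (univ : Finset (Fin 2))).card • 1 ≤ ∑ p, f (.inr p) :=
    calc _ ≤ ∑ p ∈ (unhit F f) ×ˢ univ, f (.inr p) :=
          card_nsmul_le_sum _ _ _ fun p hp => one_le_of_mem_unhit hf (mem_product.mp hp).1 p.2
      _ ≤ ∑ p, f (.inr p) := sum_le_sum_of_subset (subset_univ _)
  rw [card_product, card_univ, Fintype.card_fin, smul_eq_mul] at h_unhit
  rw [smul_eq_mul] at h_twos
  rw [Fintype.sum_sum_type]
  omega

lemma isHittingSet_hittingSetOf [Fintype α] [DecidableEq α] (hne : ∀ j, (F j).Nonempty) :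
    IsHittingSet F (hittingSetOf f hne) := by
  intro j
  by_cases hj : j ∈ unhit F f
  · exact ⟨(hne j).choose, mem_union_right _ (mem_image_of_mem _ hj), (hne j).choose_spec⟩
  · obtain ⟨u, huF, hu⟩ : ∃ u ∈ F j, f (.inl u) = 2 := by simpa [unhit] using hj
    exact ⟨u, mem_union_left _ (mem_filter.mpr ⟨mem_univ _, hu⟩), huF⟩

lemma card_hittingSetOf_le [Fintype α] [DecidableEq α] (hne : ∀ j, (F j).Nonempty) :
    (hittingSetOf f hne).card ≤ (twos f).card + (unhit F f).card :=
  (card_union_le _ _).trans (Nat.add_le_add_left card_image_le _)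

end Backward

end SplitGraph

open SplitGraph

/-- For `U` nonempty, all sets `S_j` nonempty and `t ≥ 1`: `(U,F)` has a
hitting set of size at most `t` iff the split graph `G(U,F)` admits a Roman dominating
function of weight at most `2t`. -/
theorem splitGraph_hitting_set_iff_rdf
    {α : Type*} [Fintype α] [Nonempty α] {m : ℕ} (F : Fin m → Finset α)
    (hne : ∀ j, (F j).Nonempty) (t : ℕ) (ht : 1 ≤ t) :
    (∃ H : Finset α, (∀ j : Fin m, ∃ u ∈ H, u ∈ F j) ∧ H.card ≤ t) ↔
    (∃ f : (α ⊕ Fin m × Fin 2) → ℕ, (∀ x, f x ≤ 2) ∧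
      (∀ x, f x = 0 → ∃ y, (splitGraph F).Adj x y ∧ f y = 2) ∧
      (∑ x, f x) ≤ 2 * t) := by
  classical
  constructor
  · rintro ⟨H, hH, hcard⟩
    obtain ⟨H', hH'_ne, hH', hcard'⟩ := exists_nonempty_isHittingSet F hH
    refine ⟨romanOfSet H', romanOfSet_le_two H', romanDominates_romanOfSet hH' hH'_ne, ?_⟩
    rw [sum_romanOfSet]
    omega
  · rintro ⟨f, -, hdom, hsum⟩
    refine ⟨hittingSetOf f hne, isHittingSet_hittingSetOf hne, ?_⟩
    calc (hittingSetOf f hne).card ≤ (twos f).card + (unhit F f).card := card_hittingSetOf_le hne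
      _ ≤ t := by have := two_mul_card_twos_add_card_unhit_le hdom; omega
end

section
/- In the SCP dynamic-programming setting, suppose index j+1 exists and blk(j+1) = blk(j) (i.e., S_{j+1} is not the first set of its block). Then for every W ⊆ α and every b ∈ {0,1,2}: OPT(W, j+1, b) = min( 2 + OPT(W \ S_{j+1}, j, 0), OPT(W, j, b) ), where arithmetic is in ℕ ∪ {∞} with 2 + ∞ = ∞. -/
/-!
An index set admissible for `OPT(W, j+1, b)` either avoids `j+1`, and is then exactly an index
set admissible for `OPT(W, j, b)` with the same cost, or it is `insert (j+1) X` with `X`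
admissible for `OPT(W \ S_{j+1}, j, 0)`, at cost two more than `X`. The flag of the current
block may be reset to `0` in the second case because `j+1` already meets that block, so it
neither needs a witness nor pays a penalty.
-/

/-- `OPT S blk flag W j b` in the SCP dynamic-programming setting: the infimum, over all
index sets `X ⊆ {i : i ≤ j}` covering `W` and meeting every block `β_x` (`x ≤ blk j`)
whose (updated) flag is `2`, of `2|X|` plus the number of blocks `β_x` (`x ≤ blk j`)
with (updated) flag `1` that `X` misses; here the flag of block `blk j` is overridden
to be `b`.  The value is `∞` if no such `X` exists. -/
noncomputable def OPT {α : Type*} [DecidableEq α] {m q : ℕ}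
    (S : Fin m → Finset α) (blk : Fin m → Fin q) (flag : Fin q → ℕ)
    (W : Finset α) (j : Fin m) (b : ℕ) : ℕ∞ :=
  sInf { n : ℕ∞ | ∃ X : Finset (Fin m),
    (∀ i ∈ X, i ≤ j) ∧
    (W ⊆ X.biUnion S) ∧
    (∀ x : Fin q, x ≤ blk j → Function.update flag (blk j) b x = 2 →
      ∃ i ∈ X, blk i = x) ∧
    n = 2 * (X.card : ℕ∞) +
      ((Finset.univ.filter (fun x : Fin q =>
        x ≤ blk j ∧ Function.update flag (blk j) b x = 1 ∧
          ∀ i ∈ X, blk i ≠ x)).card : ℕ∞) }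

namespace SCP

variable {α : Type*} [DecidableEq α] {m q : ℕ}
  (S : Fin m → Finset α) (blk : Fin m → Fin q) (flag : Fin q → ℕ)

structure Admissible (W : Finset α) (j : Fin m) (b : ℕ) (X : Finset (Fin m)) : Prop where
  le_bound : ∀ i ∈ X, i ≤ j
  subset_biUnion : W ⊆ X.biUnion S
  meets_required : ∀ x : Fin q, x ≤ blk j → Function.update flag (blk j) b x = 2 →
    ∃ i ∈ X, blk i = x

def cost (c : Fin q) (b : ℕ) (X : Finset (Fin m)) : ℕ∞ :=
  2 * (X.card : ℕ∞) +
    ((Finset.univ.filter (fun x : Fin q =>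
      x ≤ c ∧ Function.update flag c b x = 1 ∧ ∀ i ∈ X, blk i ≠ x)).card : ℕ∞)

theorem OPT_eq_iInf (W : Finset α) (j : Fin m) (b : ℕ) :
    OPT S blk flag W j b =
      ⨅ (X) (_ : Admissible S blk flag W j b X), cost blk flag (blk j) b X :=
  le_antisymm (le_iInf₂ fun X hX => sInf_le ⟨X, hX.1, hX.2, hX.3, rfl⟩)
    (le_sInf <| by rintro _ ⟨X, h₁, h₂, h₃, rfl⟩; exact iInf₂_le X ⟨h₁, h₂, h₃⟩)

variable {S blk flag} {j j' : Fin m}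

theorem admissible_iff_admissible_succ_and_notMem (hj' : (j' : ℕ) = j + 1)
    (hblk : blk j' = blk j) {W : Finset α} {b : ℕ} {X : Finset (Fin m)} :
    Admissible S blk flag W j b X ↔ Admissible S blk flag W j' b X ∧ j' ∉ X := by
  have hle : ∀ i : Fin m, i ≤ j ↔ i ≤ j' ∧ i ≠ j' := fun i => by
    simp only [Fin.le_def, ne_eq, Fin.ext_iff]; omega
  constructor
  · rintro ⟨h₁, h₂, h₃⟩
    exact ⟨⟨fun i hi => ((hle i).1 (h₁ i hi)).1, h₂, hblk ▸ h₃⟩,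
      fun h => ((hle j').1 (h₁ j' h)).2 rfl⟩
  · rintro ⟨⟨h₁, h₂, h₃⟩, hX⟩
    exact ⟨fun i hi => (hle i).2 ⟨h₁ i hi, ne_of_mem_of_not_mem hi hX⟩, h₂, hblk ▸ h₃⟩

theorem admissible_insert_iff (hj' : (j' : ℕ) = j + 1) (hblk : blk j' = blk j)
    {W : Finset α} {b : ℕ} {X : Finset (Fin m)} (hX : j' ∉ X) :
    Admissible S blk flag W j' b (insert j' X) ↔ Admissible S blk flag (W \ S j') j 0 X := by
  have hle : ∀ i ∈ X, i ≤ j ↔ i ≤ j' := fun i hi => by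
    have := ne_of_mem_of_not_mem hi hX
    simp only [Fin.le_def, ne_eq, Fin.ext_iff] at this ⊢; omega
  have hcover : W ⊆ (insert j' X).biUnion S ↔ W \ S j' ⊆ X.biUnion S := by
    rw [Finset.biUnion_insert]
    exact sdiff_le_iff.symm
  have hmeets : ∀ x, (x ≤ blk j' → Function.update flag (blk j') b x = 2 →
        ∃ i ∈ insert j' X, blk i = x) ↔
      (x ≤ blk j → Function.update flag (blk j) 0 x = 2 → ∃ i ∈ X, blk i = x) := fun x => by
    rw [hblk]
    rcases eq_or_ne x (blk j) with rfl | hx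
    · simp [hblk]
    · simp [Function.update_of_ne hx, hblk, Ne.symm hx]
  constructor
  · rintro ⟨h₁, h₂, h₃⟩
    exact ⟨fun i hi => (hle i hi).2 (h₁ i (Finset.mem_insert_of_mem hi)), hcover.1 h₂,
      fun x => (hmeets x).1 (h₃ x)⟩
  · rintro ⟨h₁, h₂, h₃⟩
    refine ⟨fun i hi => ?_, hcover.2 h₂, fun x => (hmeets x).2 (h₃ x)⟩
    rcases Finset.mem_insert.1 hi with rfl | hi
    exacts [le_rfl, (hle i hi).1 (h₁ i hi)]

theorem cost_insert {c : Fin q} (hc : blk j' = c) {b : ℕ} {X : Finset (Fin m)} (hX : j' ∉ X) :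
    cost blk flag c b (insert j' X) = 2 + cost blk flag c 0 X := by
  have hmissed : ∀ x, (x ≤ c ∧ Function.update flag c b x = 1 ∧ ∀ i ∈ insert j' X, blk i ≠ x) ↔
      (x ≤ c ∧ Function.update flag c 0 x = 1 ∧ ∀ i ∈ X, blk i ≠ x) := fun x => by
    rcases eq_or_ne x c with rfl | hx
    · simp [hc]
    · simp [Function.update_of_ne hx, hc, Ne.symm hx]
  simp only [cost, hmissed, Finset.card_insert_of_notMem hX]
  push_cast
  ring

end SCP

open SCP in
theorem scp_recurrence_same_block_general
    {α : Type*} [DecidableEq α] {m q : ℕ}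
    (S : Fin m → Finset α) (blk : Fin m → Fin q)
    (flag : Fin q → ℕ)
    (j j' : Fin m) (hj' : (j' : ℕ) = (j : ℕ) + 1) (hblk : blk j' = blk j)
    (W : Finset α) (b : ℕ) :
    OPT S blk flag W j' b =
      min (2 + OPT S blk flag (W \ S j') j 0) (OPT S blk flag W j b) := by
  have hlt : j < j' := Fin.lt_def.2 (by omega)
  simp only [OPT_eq_iInf, hblk, ENat.add_iInf₂]
  apply le_antisymm
  · refine le_min (le_iInf₂ fun X hX => ?_) (le_iInf₂ fun X hX => ?_)
    · have hX' : j' ∉ X := fun h => (hX.le_bound j' h).not_gt hlt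
      rw [← cost_insert hblk hX']
      exact iInf₂_le _ ((admissible_insert_iff hj' hblk hX').2 hX)
    · exact iInf₂_le X ((admissible_iff_admissible_succ_and_notMem hj' hblk).1 hX).1
  · refine le_iInf₂ fun X hX => ?_
    by_cases h : j' ∈ X
    · rw [← Finset.insert_erase h] at hX ⊢
      have hX' := Finset.notMem_erase j' X
      refine min_le_of_left_le ?_
      rw [cost_insert hblk hX']
      exact iInf₂_le _ ((admissible_insert_iff hj' hblk hX').1 hX)
    · exact min_le_of_right_le
        (iInf₂_le X ((admissible_iff_admissible_succ_and_notMem hj' hblk).2 ⟨hX, h⟩))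

/-- SCP recurrence when `S_{j+1}` is not the first set of its block:
`OPT(W, j+1, b) = min(2 + OPT(W \\ S_{j+1}, j, 0), OPT(W, j, b))`. -/
theorem scp_recurrence_same_block
    {α : Type*} [DecidableEq α] {m q : ℕ} (hm : 0 < m) (hq : 0 < q)
    (S : Fin m → Finset α) (blk : Fin m → Fin q)
    (hmono : Monotone blk) (hsurj : Function.Surjective blk)
    (flag : Fin q → ℕ) (hflag : ∀ x, flag x ≤ 2)
    (j j' : Fin m) (hj' : (j' : ℕ) = (j : ℕ) + 1) (hblk : blk j' = blk j)
    (W : Finset α) (b : ℕ) (hb : b ≤ 2) :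
    OPT S blk flag W j' b =
      min (2 + OPT S blk flag (W \ S j') j 0) (OPT S blk flag W j b) :=
  scp_recurrence_same_block_general S blk flag j j' hj' hblk W b
end
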